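/- Let g and g' be flows on a finite path set P with the same delays d : P → ℝ≥0, where g' is obtained from g by deleting rate from slowest flow-carrying paths with total deleted rate δ', and g'' is obtained from g by the same greedy procedure with total deleted rate δ'' ≥ δ'. Then M(g'') ≤ M(g'). -/

import Mathlib

/-!
Greedy deletion only ever lowers the slowest flow-carrying path, and the maximum delay never
increases along the way; hence a path faster than the current maximum delay still carries its
original rate. Suppose `M'' > M'`. The first run has emptied every path slower than `M'`, so it
deleted at least the original rate `S` of those paths. The second run has left every path of
delay at most `M'` untouched, so it deleted only from paths slower than `M'`, and strictly less
than `S`, because a path of delay `M''` still carries flow. This contradicts `δ' ≤ δ''`.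
-/

noncomputable def thr {P : Type*} [Fintype P] (x : P → ℝ) : ℝ := ∑ p, x p

noncomputable def maxDelay {P : Type*} [Fintype P] (x d : P → ℝ) : ℝ :=
  sSup (d '' {p | 0 < x p})

/-- `GreedyDeletion d f N δ` : the sequence `f 0, f 1, ..., f N` is produced by, at each
step `n < N`, removing rate `δ n > 0` from a currently-slowest flow-carrying path. -/
def GreedyDeletion {P : Type*} [Fintype P] [DecidableEq P]
    (d : P → ℝ) (f : ℕ → P → ℝ) (N : ℕ) (δ : ℕ → ℝ) : Prop :=
  ∀ n < N, 0 < δ n ∧ ∃ p : P, 0 < f n p ∧ d p = maxDelay (f n) d ∧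
    δ n ≤ f n p ∧ f (n + 1) = Function.update (f n) p (f n p - δ n)

section MaxDelay

variable {P : Type*} [Fintype P] {x y d g : P → ℝ}

lemma le_maxDelay {p : P} (hp : 0 < x p) : d p ≤ maxDelay x d :=
  le_csSup (Set.toFinite _).bddAbove ⟨p, hp, rfl⟩

lemma maxDelay_nonneg (hd : ∀ p, 0 ≤ d p) : 0 ≤ maxDelay x d := by
  rcases (d '' {p | 0 < x p}).eq_empty_or_nonempty with h | ⟨_, p, hp, rfl⟩
  · simp [maxDelay, h]
  · exact (hd p).trans (le_maxDelay hp)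

lemma maxDelay_mono (hd : ∀ p, 0 ≤ d p) (h : ∀ q, 0 < x q → 0 < y q) :
    maxDelay x d ≤ maxDelay y d := by
  rcases (d '' {p | 0 < x p}).eq_empty_or_nonempty with hx | hx
  · simpa [maxDelay, hx] using maxDelay_nonneg hd
  · exact csSup_le_csSup (Set.toFinite _).bddAbove hx (Set.image_mono h)

lemma exists_pos_apply_eq_maxDelay (h : maxDelay x d ≠ 0) :
    ∃ p, 0 < x p ∧ d p = maxDelay x d := by
  rcases (d '' {p | 0 < x p}).eq_empty_or_nonempty with hx | hx
  · simp [maxDelay, hx] at h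
  · exact hx.csSup_mem (Set.toFinite _)

lemma sum_delay_gt_le_thr_sub {t : ℝ} (hx : 0 ≤ x) (hxg : x ≤ g) (ht : maxDelay x d ≤ t) :
    ∑ q with t < d q, g q ≤ thr g - thr x := by
  have hvanish : ∀ q, t < d q → x q = 0 := fun q hq =>
    ((hx q).eq_or_lt.resolve_right fun hpos => (ht.trans_lt hq).not_ge (le_maxDelay hpos)).symm
  calc ∑ q with t < d q, g q = ∑ q with t < d q, (g q - x q) :=
        Finset.sum_congr rfl fun q hq => by rw [hvanish q (Finset.mem_filter.1 hq).2, sub_zero]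
    _ ≤ ∑ q, (g q - x q) :=
        Finset.sum_le_sum_of_subset_of_nonneg (Finset.filter_subset _ _)
          fun q _ _ => sub_nonneg.2 (hxg q)
    _ = thr g - thr x := Finset.sum_sub_distrib ..

lemma thr_sub_lt_sum_delay_gt {t : ℝ} (hx : 0 ≤ x)
    (hfix : ∀ q, d q < maxDelay x d → x q = g q) (ht₀ : 0 ≤ t) (ht : t < maxDelay x d) :
    thr g - thr x < ∑ q with t < d q, g q := by
  obtain ⟨p, hp, hdp⟩ := exists_pos_apply_eq_maxDelay (ht₀.trans_lt ht).ne'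
  calc thr g - thr x = ∑ q, (g q - x q) := (Finset.sum_sub_distrib ..).symm
    _ = ∑ q with t < d q, (g q - x q) := by
        refine (Finset.sum_filter_of_ne fun q _ hq => ?_).symm
        by_contra hle
        exact hq (sub_eq_zero.2 (hfix q ((not_lt.1 hle).trans_lt ht)).symm)
    _ < ∑ q with t < d q, g q :=
        Finset.sum_lt_sum (fun q _ => sub_le_self _ (hx q))
          ⟨p, Finset.mem_filter.2 ⟨Finset.mem_univ p, hdp ▸ ht⟩, sub_lt_self _ hp⟩

end MaxDelay

namespace GreedyDeletion

variable {P : Type*} [Fintype P] [DecidableEq P] {d : P → ℝ} {f : ℕ → P → ℝ} {N : ℕ}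
  {δ : ℕ → ℝ}

lemma of_succ (h : GreedyDeletion d f (N + 1) δ) : GreedyDeletion d f N δ :=
  fun n hn => h n (hn.trans N.lt_succ_self)

lemma apply_succ_le (h : GreedyDeletion d f (N + 1) δ) : f (N + 1) ≤ f N := by
  obtain ⟨hδ, p, -, -, -, hstep⟩ := h N N.lt_succ_self
  intro q
  rw [hstep, Function.update_apply]
  split_ifs with hq
  · subst hq; linarith
  · exact le_rfl

lemma nonneg_succ (h : GreedyDeletion d f (N + 1) δ) (hf : 0 ≤ f N) : 0 ≤ f (N + 1) := by
  obtain ⟨-, p, -, -, hδp, hstep⟩ := h N N.lt_succ_self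
  intro q
  rw [hstep, Function.update_apply]
  split_ifs with hq
  · exact sub_nonneg.2 hδp
  · exact hf q

lemma pos_of_pos_succ (h : GreedyDeletion d f (N + 1) δ) {q : P} (hq : 0 < f (N + 1) q) :
    0 < f N q :=
  hq.trans_le (h.apply_succ_le q)

lemma apply_succ_eq_of_lt_maxDelay (h : GreedyDeletion d f (N + 1) δ) {q : P}
    (hq : d q < maxDelay (f N) d) : f (N + 1) q = f N q := by
  obtain ⟨-, p, -, hdp, -, hstep⟩ := h N N.lt_succ_self
  rw [hstep, Function.update_of_ne]
  rintro rfl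
  exact hq.ne hdp

lemma thr_succ (h : GreedyDeletion d f (N + 1) δ) : thr (f (N + 1)) = thr (f N) - δ N := by
  obtain ⟨-, p, -, -, -, hstep⟩ := h N N.lt_succ_self
  rw [thr, thr, hstep, Finset.sum_update_of_mem (Finset.mem_univ p),
    ← Finset.add_sum_erase _ _ (Finset.mem_univ p), Finset.sdiff_singleton_eq_erase]
  ring

lemma nonneg (h : GreedyDeletion d f N δ) (h₀ : 0 ≤ f 0) : 0 ≤ f N := by
  induction N with
  | zero => exact h₀
  | succ N ih => exact h.nonneg_succ (ih h.of_succ)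

lemma le_apply_zero (h : GreedyDeletion d f N δ) : f N ≤ f 0 := by
  induction N with
  | zero => exact le_rfl
  | succ N ih => exact h.apply_succ_le.trans (ih h.of_succ)

lemma apply_eq_apply_zero_of_lt_maxDelay (hd : ∀ p, 0 ≤ d p) (h : GreedyDeletion d f N δ)
    {q : P} (hq : d q < maxDelay (f N) d) : f N q = f 0 q := by
  induction N with
  | zero => rfl
  | succ N ih =>
    have hq' : d q < maxDelay (f N) d :=
      hq.trans_le (maxDelay_mono hd fun _ => h.pos_of_pos_succ)
    rw [h.apply_succ_eq_of_lt_maxDelay hq', ih h.of_succ hq']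

lemma sum_eq_thr_sub (h : GreedyDeletion d f N δ) :
    ∑ n ∈ Finset.range N, δ n = thr (f 0) - thr (f N) := by
  induction N with
  | zero => simp
  | succ N ih => rw [Finset.sum_range_succ, ih h.of_succ, h.thr_succ]; ring

end GreedyDeletion

theorem stmt_15 {P : Type*} [Fintype P] [DecidableEq P]
    (d : P → ℝ) (hd : ∀ p, 0 ≤ d p)
    (g : P → ℝ) (hg : ∀ p, 0 ≤ g p)
    (N' N'' : ℕ) (f' f'' : ℕ → P → ℝ) (δ' δ'' : ℕ → ℝ)
    (h0' : f' 0 = g) (h0'' : f'' 0 = g)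
    (hgreedy' : GreedyDeletion d f' N' δ')
    (hgreedy'' : GreedyDeletion d f'' N'' δ'')
    (htotals : (∑ n ∈ Finset.range N', δ' n) ≤ ∑ n ∈ Finset.range N'', δ'' n) :
    maxDelay (f'' N'') d ≤ maxDelay (f' N') d := by
  by_contra! hlt
  set M' := maxDelay (f' N') d
  have hdeleted' : ∑ q with M' < d q, g q ≤ thr g - thr (f' N') := by
    rw [← h0'] at hg ⊢
    exact sum_delay_gt_le_thr_sub (hgreedy'.nonneg hg) hgreedy'.le_apply_zero le_rfl
  have hdeleted'' : thr g - thr (f'' N'') < ∑ q with M' < d q, g q := by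
    rw [← h0''] at hg ⊢
    exact thr_sub_lt_sum_delay_gt (hgreedy''.nonneg hg)
      (fun _ => hgreedy''.apply_eq_apply_zero_of_lt_maxDelay hd) (maxDelay_nonneg hd) hlt
  rw [hgreedy'.sum_eq_thr_sub, hgreedy''.sum_eq_thr_sub, h0', h0''] at htotals
  linarith
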